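/- Let u : L ⟶ M be a morphism of ℤ-indexed cochain complexes of abelian groups, let q : N ⟶ M be a quasi-isomorphism, let F ⊆ N be a subcomplex with inclusion i and quotient complex N/F, and let φ : L ⊕ F ⟶ M be the morphism φ(l,x) = u(l) + q(i(x)). For each integer n let π_n : H^n(Cone(φ)) → H^n(L) be the map induced by the degreewise projection Cone(φ)^n = L^n ⊕ F^n ⊕ M^{n−1} → L^n, and let β_n : H^n(L) → H^n(N/F) be the map sending a class α to the image in H^n(N/F) of the unique class in H^n(N) that is mapped by the isomorphism H^n(q) to H^n(u)(α). Then there exist homomorphisms δ_n : H^n(N/F) → H^{n+1}(Cone(φ)) making the sequence ⋯ → H^n(N/F) →δ_n H^{n+1}(Cone(φ)) →π_{n+1} H^{n+1}(L) →β_{n+1} H^{n+1}(N/F) →δ_{n+1} H^{n+2}(Cone(φ)) → ⋯ exact. -/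

import Mathlib

/-! Basic framework: ℤ-indexed cochain complexes of abelian groups, chain maps,
cohomology, mapping cones (with the sign convention
`d(a,b) = (d a, (-1)^(n+1) f a + d b)`), brutal truncations. -/

universe u

structure Cplx : Type (u + 1) where
  X : ℤ → Type u
  inst : ∀ n, AddCommGroup (X n)
  d : ∀ n, X n →+ X (n + 1)
  dsq : ∀ (n : ℤ) (x : X n), d (n + 1) (d n x) = 0

attribute [instance] Cplx.inst

namespace Cplx

/-- Transport along an equality of degrees. -/
def tr (C : Cplx) {m n : ℤ} (h : m = n) : C.X m →+ C.X n where
  toFun x := _root_.cast (congrArg C.X h) x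
  map_zero' := by subst h; rfl
  map_add' := by subst h; intros; rfl

lemma tr_tr (C : Cplx) {m n p : ℤ} (h1 : m = n) (h2 : n = p) (x : C.X m) :
    C.tr h2 (C.tr h1 x) = C.tr (h1.trans h2) x := by subst h1; subst h2; rfl

lemma d_tr (C : Cplx) {m n : ℤ} (h : m = n) (x : C.X m) :
    C.d n (C.tr h x) = C.tr (congrArg (· + 1) h) (C.d m x) := by subst h; rfl

/-- Morphisms of cochain complexes. -/
structure Hom (A B : Cplx) where
  f : ∀ n, A.X n →+ B.X n
  comm : ∀ (n : ℤ) (x : A.X n), f (n + 1) (A.d n x) = B.d n (f n x)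

def Hom.comp {A B C : Cplx} (g : Hom B C) (h : Hom A B) : Hom A C where
  f n := (g.f n).comp (h.f n)
  comm n x := by simp only [AddMonoidHom.comp_apply, h.comm, g.comm]

lemma Hom.f_tr {A B : Cplx} (g : Hom A B) {m n : ℤ} (h : m = n) (x : A.X m) :
    g.f n (A.tr h x) = B.tr h (g.f m x) := by subst h; rfl

/-- The subgroup of cocycles in degree `n`. -/
def Zc (C : Cplx) (n : ℤ) : AddSubgroup (C.X n) := (C.d n).ker

lemma mem_Zc {C : Cplx} {n : ℤ} {x : C.X n} : x ∈ C.Zc n ↔ C.d n x = 0 :=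
  AddMonoidHom.mem_ker

/-- The subgroup of coboundaries in degree `n`. -/
def Bd (C : Cplx) (n : ℤ) : AddSubgroup (C.X n) :=
  AddSubgroup.map (C.tr (show n - 1 + 1 = n by omega)) (C.d (n - 1)).range

/-- The `n`-th cohomology group. -/
def H (C : Cplx) (n : ℤ) : Type u :=
  ↥(C.Zc n) ⧸ (C.Bd n).addSubgroupOf (C.Zc n)

instance (C : Cplx) (n : ℤ) : AddCommGroup (C.H n) :=
  inferInstanceAs (AddCommGroup (↥(C.Zc n) ⧸ (C.Bd n).addSubgroupOf (C.Zc n)))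

/-- The cohomology class of a cocycle. -/
def clsOf (C : Cplx) (n : ℤ) (x : C.X n) (hx : x ∈ C.Zc n) : C.H n :=
  QuotientAddGroup.mk (⟨x, hx⟩ : C.Zc n)

/-- The map induced on cocycles by a chain map. -/
def zMap {A B : Cplx} (g : Hom A B) (n : ℤ) : ↥(A.Zc n) →+ ↥(B.Zc n) :=
  AddMonoidHom.codRestrict ((g.f n).comp (A.Zc n).subtype) (B.Zc n) (fun x => by
    have hx : A.d n ((A.Zc n).subtype x) = 0 := mem_Zc.mp x.2
    exact mem_Zc.mpr (by rw [AddMonoidHom.comp_apply, ← g.comm, hx, map_zero]))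

/-- The map induced on cohomology by a chain map. -/
def Hmap {A B : Cplx} (g : Hom A B) (n : ℤ) : A.H n →+ B.H n :=
  QuotientAddGroup.map _ _ (zMap g n) (by
    intro x hx
    rw [AddSubgroup.mem_comap, AddSubgroup.mem_addSubgroupOf]
    rw [AddSubgroup.mem_addSubgroupOf] at hx
    obtain ⟨y, hy, hxy⟩ := hx
    obtain ⟨z, rfl⟩ := hy
    have hcoe : ((zMap g n x : ↥(B.Zc n)) : B.X n) = g.f n (x : A.X n) := rfl
    rw [hcoe, ← hxy, Hom.f_tr]
    exact AddSubgroup.mem_map.mpr ⟨B.d (n - 1) (g.f (n - 1) z),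
      AddMonoidHom.mem_range.mpr ⟨g.f (n - 1) z, rfl⟩, by rw [g.comm]⟩)

/-- Direct sum of two cochain complexes. -/
def dsum (A B : Cplx) : Cplx where
  X n := A.X n × B.X n
  inst n := inferInstance
  d n := (A.d n).prodMap (B.d n)
  dsq n x := by
    show (A.d (n + 1) (A.d n x.1), B.d (n + 1) (B.d n x.2)) = 0
    rw [A.dsq, B.dsq]; rfl

/-- The morphism `L ⊕ F ⟶ M`, `(l, x) ↦ u l + g x`. -/
def sumHom {L F M : Cplx} (u : Hom L M) (g : Hom F M) : Hom (dsum L F) M where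
  f n := (u.f n).coprod (g.f n)
  comm n x := by
    show u.f (n + 1) (L.d n x.1) + g.f (n + 1) (F.d n x.2) =
      M.d n (u.f n x.1 + g.f n x.2)
    rw [map_add, u.comm, g.comm]

/-- The mapping cone of a chain map, with differential
`d (a, b) = (d a, (-1)^(n+1) • g a + d b)`. -/
def cone {A B : Cplx} (g : Hom A B) : Cplx where
  X n := A.X n × B.X (n - 1)
  inst n := inferInstance
  d n := AddMonoidHom.mk' (fun p =>
      (A.d n p.1,
        B.tr (show n = n + 1 - 1 by omega) ((Int.negOnePow (n + 1) : ℤ) • g.f n p.1) +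
          B.tr (show n - 1 + 1 = n + 1 - 1 by omega) (B.d (n - 1) p.2)))
    (fun p q => by
      refine Prod.ext (map_add _ _ _) ?_
      show B.tr _ ((Int.negOnePow (n + 1) : ℤ) • g.f n (p.1 + q.1)) +
          B.tr _ (B.d (n - 1) (p.2 + q.2)) = _
      rw [map_add (g.f n), smul_add, map_add, map_add (B.d (n - 1)), map_add]
      simp only [Prod.snd_add]
      abel)
  dsq n p := by
    refine Prod.ext (A.dsq n p.1) ?_
    show B.tr (show n + 1 = n + 1 + 1 - 1 by omega)
          ((Int.negOnePow (n + 1 + 1) : ℤ) • g.f (n + 1) (A.d n p.1)) +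
        B.tr (show n + 1 - 1 + 1 = n + 1 + 1 - 1 by omega)
          (B.d (n + 1 - 1)
            (B.tr (show n = n + 1 - 1 by omega) ((Int.negOnePow (n + 1) : ℤ) • g.f n p.1) +
              B.tr (show n - 1 + 1 = n + 1 - 1 by omega) (B.d (n - 1) p.2))) = 0
    rw [map_add (B.d (n + 1 - 1)), d_tr, d_tr, map_add (B.tr _), tr_tr, tr_tr,
      B.dsq (n - 1) p.2, map_zero, add_zero, g.comm n p.1,
      map_zsmul (B.d n)]
    show B.tr (show n + 1 = n + 1 + 1 - 1 by omega)
        ((Int.negOnePow (n + 1 + 1) : ℤ) • B.d n (g.f n p.1)) +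
      B.tr (show n + 1 = n + 1 + 1 - 1 by omega)
        ((Int.negOnePow (n + 1) : ℤ) • B.d n (g.f n p.1)) = 0
    rw [← map_add, ← add_smul]
    have : ((Int.negOnePow (n + 1 + 1) : ℤ) + (Int.negOnePow (n + 1) : ℤ)) = 0 := by
      rw [Int.negOnePow_succ (n + 1), Units.val_neg, neg_add_cancel]
    rw [this, zero_smul, map_zero]

/-- A subcomplex determined by a `d`-stable family of subgroups. -/
def subCplx (C : Cplx) (S : ∀ n, AddSubgroup (C.X n))
    (hS : ∀ (n : ℤ) (x : C.X n), x ∈ S n → C.d n x ∈ S (n + 1)) : Cplx where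
  X n := S n
  inst n := inferInstance
  d n := AddMonoidHom.codRestrict ((C.d n).comp (S n).subtype) (S (n + 1))
    (fun x => hS n x.1 x.2)
  dsq n x := Subtype.ext (C.dsq n x.1)

/-- The inclusion of a subcomplex. -/
def subIncl (C : Cplx) (S : ∀ n, AddSubgroup (C.X n))
    (hS : ∀ (n : ℤ) (x : C.X n), x ∈ S n → C.d n x ∈ S (n + 1)) :
    Hom (subCplx C S hS) C where
  f n := (S n).subtype
  comm _ _ := rfl

/-- The quotient complex by a `d`-stable family of subgroups. -/
def quotCplx (C : Cplx) (S : ∀ n, AddSubgroup (C.X n))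
    (hS : ∀ (n : ℤ) (x : C.X n), x ∈ S n → C.d n x ∈ S (n + 1)) : Cplx where
  X n := C.X n ⧸ S n
  inst n := inferInstance
  d n := QuotientAddGroup.map (S n) (S (n + 1)) (C.d n) (fun x hx => by
    rw [AddSubgroup.mem_comap]; exact hS n x hx)
  dsq n x := by
    induction x using QuotientAddGroup.induction_on with
    | H z =>
      show QuotientAddGroup.map _ _ _ _ (QuotientAddGroup.map _ _ _ _ ((z : C.X n ⧸ S n))) = 0
      rw [QuotientAddGroup.map_mk, QuotientAddGroup.map_mk, C.dsq]
      rfl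

/-- The projection onto a quotient complex. -/
def quotProj (C : Cplx) (S : ∀ n, AddSubgroup (C.X n))
    (hS : ∀ (n : ℤ) (x : C.X n), x ∈ S n → C.d n x ∈ S (n + 1)) :
    Hom C (quotCplx C S hS) where
  f n := QuotientAddGroup.mk' (S n)
  comm _ _ := rfl

/-- The family of subgroups defining the brutal truncation `σ_{≥k}`. -/
def geSub (F : Cplx) (k n : ℤ) : AddSubgroup (F.X n) := if k ≤ n then ⊤ else ⊥

lemma geSub_stable (F : Cplx) (k : ℤ) :
    ∀ (n : ℤ) (x : F.X n), x ∈ geSub F k n → F.d n x ∈ geSub F k (n + 1) := by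
  intro n x hx
  by_cases h : k ≤ n + 1
  · simp [geSub, h]
  · have h' : ¬ k ≤ n := by omega
    simp only [geSub, h', if_neg, if_false, AddSubgroup.mem_bot] at hx
    simp [geSub, h, hx]

/-- The brutal truncation `σ_{≥k} F` (a subcomplex of `F`). -/
def truncGE (F : Cplx) (k : ℤ) : Cplx := subCplx F (geSub F k) (geSub_stable F k)

/-- The inclusion `σ_{≥k} F ⟶ F`. -/
def truncGEincl (F : Cplx) (k : ℤ) : Hom (truncGE F k) F :=
  subIncl F (geSub F k) (geSub_stable F k)

/-- The brutal truncation `σ_{<k} F` (a quotient complex of `F`). -/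
def truncLT (F : Cplx) (k : ℤ) : Cplx := quotCplx F (geSub F k) (geSub_stable F k)

/-- The projection `F ⟶ σ_{<k} F`. -/
def truncLTproj (F : Cplx) (k : ℤ) : Hom F (truncLT F k) :=
  quotProj F (geSub F k) (geSub_stable F k)

end Cplx

open Cplx in
/-- The projection `Cone(φ) → L` onto the first summand, as a chain map. -/
def Cplx.coneProjL {L F M : Cplx} (u : Cplx.Hom L M) (g : Cplx.Hom F M) :
    Cplx.Hom (cone (sumHom u g)) L where
  f n := (AddMonoidHom.fst (L.X n) (F.X n)).comp
      (AddMonoidHom.fst ((dsum L F).X n) (M.X (n - 1)))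
  comm _ _ := rfl

/-! Rescaling the `M`-component of `Cone(φ)^n` by `(-1)^n` turns its differential into
`d (l, x, m) = (d l, d x, u l + q x - d m)`. Projecting to `L` then has image the classes `α` with
`H(u) α ∈ H(q) (H(F))`, which is the kernel of `β` by exactness of `H(F) → H(N) → H(N/F)`.
The connecting map sends the class of `a ∈ N^n` with `d a ∈ F^{n+1}` to the class of
`(0, d a, q a)`. Exactness at `H^{n+1}(Cone φ)` rests on the fact that for a quasi-isomorphism
`q`, a cocycle `x` with `q x = d w` is `d a` for some `a` with `q a ≡ w` modulo boundaries. -/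

namespace Cplx

@[simp]
lemma tr_rfl (C : Cplx) {n : ℤ} (h : n = n) (x : C.X n) : C.tr h x = x := rfl

lemma mem_Bd_iff (C : Cplx) {k n : ℤ} (h : k + 1 = n) {x : C.X n} :
    x ∈ C.Bd n ↔ ∃ y : C.X k, C.tr h (C.d k y) = x := by
  subst h
  constructor
  · rintro ⟨_, ⟨y, rfl⟩, rfl⟩
    exact ⟨C.tr (by omega) y, by rw [d_tr, tr_tr]⟩
  · rintro ⟨y, rfl⟩
    exact ⟨_, ⟨C.tr (by omega) y, rfl⟩, by rw [d_tr, tr_tr]⟩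

lemma tr_d_mem_Bd (C : Cplx) {k n : ℤ} (h : k + 1 = n) (y : C.X k) :
    C.tr h (C.d k y) ∈ C.Bd n :=
  (C.mem_Bd_iff h).2 ⟨y, rfl⟩

lemma Bd_le_Zc (C : Cplx) (n : ℤ) : C.Bd n ≤ C.Zc n := by
  intro x hx
  obtain ⟨y, rfl⟩ := (C.mem_Bd_iff (sub_add_cancel n 1)).1 hx
  rw [mem_Zc, d_tr, C.dsq, map_zero]

lemma clsOf_eq_iff (C : Cplx) {n : ℤ} {x y : C.X n} (hx : x ∈ C.Zc n) (hy : y ∈ C.Zc n) :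
    C.clsOf n x hx = C.clsOf n y hy ↔ y - x ∈ C.Bd n := by
  refine QuotientAddGroup.eq.trans ?_
  rw [AddSubgroup.mem_addSubgroupOf, AddSubgroup.coe_add, AddSubgroup.coe_neg, neg_add_eq_sub]

lemma clsOf_eq_zero_iff (C : Cplx) {n : ℤ} {x : C.X n} (hx : x ∈ C.Zc n) :
    C.clsOf n x hx = 0 ↔ x ∈ C.Bd n := by
  rw [← show C.clsOf n 0 (zero_mem _) = 0 from rfl, eq_comm, clsOf_eq_iff, sub_zero]

lemma exists_clsOf_eq (C : Cplx) {n : ℤ} (α : C.H n) : ∃ x hx, C.clsOf n x hx = α := by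
  induction α using QuotientAddGroup.induction_on with
  | H z => exact ⟨z.1, z.2, rfl⟩

lemma Hom.map_mem_Zc {A B : Cplx} (g : Hom A B) {n : ℤ} {x : A.X n} (hx : x ∈ A.Zc n) :
    g.f n x ∈ B.Zc n := by
  rw [mem_Zc, ← g.comm, mem_Zc.1 hx, map_zero]

lemma Hmap_clsOf {A B : Cplx} (g : Hom A B) {n : ℤ} {x : A.X n} (hx : x ∈ A.Zc n) :
    Hmap g n (A.clsOf n x hx) = B.clsOf n (g.f n x) (g.map_mem_Zc hx) := rfl

lemma Hmap_comp {A B C : Cplx} (g : Hom B C) (f : Hom A B) (n : ℤ) :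
    Hmap (g.comp f) n = (Hmap g n).comp (Hmap f n) := by
  ext α
  obtain ⟨x, hx, rfl⟩ := A.exists_clsOf_eq α
  rfl

lemma negOnePow_smul_negOnePow_smul {G : Type*} [AddCommGroup G] (n : ℤ) (x : G) :
    (Int.negOnePow n : ℤ) • (Int.negOnePow n : ℤ) • x = x := by
  rw [smul_smul, ← Units.val_mul, Int.units_mul_self, Units.val_one, one_smul]

section Cone

variable {A B : Cplx} (g : Hom A B)

/-- Coordinates on `cone g` in which its differential is sign-free:
`d (a, b) = (d a, g a - d b)` (`d_coneMk`). -/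
def coneMk {k n : ℤ} (h : k + 1 = n) : A.X n × B.X k ≃+ (cone g).X n where
  toFun p := (p.1, B.tr (by omega) ((Int.negOnePow n : ℤ) • p.2))
  invFun c := (c.1, (Int.negOnePow n : ℤ) • B.tr (by omega) c.2)
  left_inv p := by
    subst h
    simp only [tr_tr, tr_rfl, negOnePow_smul_negOnePow_smul]
  right_inv c := by
    subst h
    simp only [tr_tr, tr_rfl, negOnePow_smul_negOnePow_smul]
    rfl
  map_add' p p' := by
    simp only [Prod.fst_add, Prod.snd_add, smul_add, map_add]
    rfl

lemma d_coneMk {k n : ℤ} (h : k + 1 = n) (a : A.X n) (b : B.X k) :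
    (cone g).d n (coneMk g h (a, b)) =
      coneMk g rfl (A.d n a, g.f n a - B.tr h (B.d k b)) := by
  subst h
  refine Prod.ext rfl ?_
  change B.tr _ ((Int.negOnePow (k + 1 + 1) : ℤ) • g.f (k + 1) a) +
      B.tr _ (B.d (k + 1 - 1) (B.tr _ ((Int.negOnePow (k + 1) : ℤ) • b))) =
    B.tr _ ((Int.negOnePow (k + 1 + 1) : ℤ) • (g.f (k + 1) a - B.tr rfl (B.d k b)))
  rw [d_tr, tr_tr, tr_rfl, smul_sub, map_sub, Int.negOnePow_succ (k + 1), Units.val_neg]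
  simp only [neg_smul, map_neg, sub_neg_eq_add, map_zsmul]

lemma coneMk_mem_Zc_iff {k n : ℤ} (h : k + 1 = n) (a : A.X n) (b : B.X k) :
    coneMk g h (a, b) ∈ (cone g).Zc n ↔ A.d n a = 0 ∧ g.f n a = B.tr h (B.d k b) := by
  rw [mem_Zc, d_coneMk, AddEquivClass.map_eq_zero_iff, Prod.mk_eq_zero, sub_eq_zero]

lemma coneMk_mem_Bd_iff {k n : ℤ} (h : k + 1 = n) (a' : A.X (n + 1)) (b' : B.X n) :
    coneMk g rfl (a', b') ∈ (cone g).Bd (n + 1) ↔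
      ∃ a b, A.d n a = a' ∧ g.f n a - B.tr h (B.d k b) = b' := by
  simp only [mem_Bd_iff _ rfl, tr_rfl, (coneMk g h).surjective.exists, Prod.exists, d_coneMk,
    EmbeddingLike.apply_eq_iff_eq, Prod.mk.injEq]

end Cone

lemma range_Hmap_coneProjL {L F M : Cplx} (u : Hom L M) (g : Hom F M) (n : ℤ) :
    (Hmap (coneProjL u g) n).range = (Hmap g n).range.comap (Hmap u n) := by
  have h : n - 1 + 1 = n := sub_add_cancel n 1
  ext α
  constructor
  · rintro ⟨γ, rfl⟩
    obtain ⟨c, hc, rfl⟩ := exists_clsOf_eq _ γ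
    obtain ⟨⟨⟨l, x⟩, m⟩, rfl⟩ := (coneMk _ h).surjective c
    obtain ⟨hd, hφ⟩ := (coneMk_mem_Zc_iff _ h _ _).1 hc
    have hx : -x ∈ F.Zc n := neg_mem (mem_Zc.2 (congrArg Prod.snd hd))
    refine ⟨F.clsOf n (-x) hx, (clsOf_eq_iff _ _ _).2 ?_⟩
    change u.f n l - g.f n (-x) ∈ M.Bd n
    rw [map_neg, sub_neg_eq_add, show u.f n l + g.f n x = M.tr h (M.d (n - 1) m) from hφ]
    exact tr_d_mem_Bd M h m
  · rintro ⟨β, hβ⟩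
    obtain ⟨l, hl, rfl⟩ := exists_clsOf_eq _ α
    obtain ⟨x, hx, rfl⟩ := exists_clsOf_eq _ β
    obtain ⟨m, hm⟩ := (M.mem_Bd_iff h).1 ((clsOf_eq_iff _ _ _).1 hβ)
    have hc : coneMk (sumHom u g) h ((l, -x), m) ∈ (cone (sumHom u g)).Zc n := by
      refine (coneMk_mem_Zc_iff _ h _ _).2 ⟨?_, ?_⟩
      · exact Prod.ext (mem_Zc.1 hl) (neg_mem hx)
      · change u.f n l + g.f n (-x) = _
        rw [hm, map_neg, sub_eq_add_neg]
        rfl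
    exact ⟨_, Hmap_clsOf (coneProjL u g) hc⟩

section Quotient

variable {N : Cplx} (S : ∀ n, AddSubgroup (N.X n))
  (hS : ∀ (n : ℤ) (x : N.X n), x ∈ S n → N.d n x ∈ S (n + 1))

lemma tr_mk_quotCplx {m n : ℤ} (h : m = n) (a : N.X m) :
    (quotCplx N S hS).tr h (QuotientAddGroup.mk a) = QuotientAddGroup.mk (N.tr h a) := by
  subst h; rfl

lemma mk_mem_Bd_quotCplx_iff {k n : ℤ} (h : k + 1 = n) (a : N.X n) :
    (QuotientAddGroup.mk a : (quotCplx N S hS).X n) ∈ (quotCplx N S hS).Bd n ↔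
      ∃ y : N.X k, a - N.tr h (N.d k y) ∈ S n := by
  refine (mem_Bd_iff _ h).trans
    (QuotientAddGroup.mk_surjective.exists.trans (exists_congr fun y => ?_))
  rw [← neg_mem_iff, neg_sub, ← QuotientAddGroup.eq_iff_sub_mem, ← tr_mk_quotCplx]
  rfl

lemma mk_mem_Zc_quotCplx_iff {n : ℤ} (a : N.X n) :
    (QuotientAddGroup.mk a : (quotCplx N S hS).X n) ∈ (quotCplx N S hS).Zc n ↔
      N.d n a ∈ S (n + 1) :=
  mem_Zc.trans (QuotientAddGroup.eq_zero_iff _)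

lemma mk_mem_Bd_quotCplx_of_mem {n : ℤ} {a : N.X n} (ha : a ∈ S n) :
    (QuotientAddGroup.mk a : (quotCplx N S hS).X n) ∈ (quotCplx N S hS).Bd n := by
  have ha0 : (QuotientAddGroup.mk a : (quotCplx N S hS).X n) = 0 :=
    (QuotientAddGroup.eq_zero_iff a).2 ha
  rw [ha0]
  exact zero_mem _

lemma range_Hmap_subIncl (n : ℤ) :
    (Hmap (subIncl N S hS) n).range = (Hmap (quotProj N S hS) n).ker := by
  have h : n - 1 + 1 = n := sub_add_cancel n 1
  ext α
  rw [AddMonoidHom.mem_range, AddMonoidHom.mem_ker]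
  constructor
  · rintro ⟨β, rfl⟩
    obtain ⟨x, hx, rfl⟩ := exists_clsOf_eq _ β
    exact (clsOf_eq_zero_iff _ _).2 (mk_mem_Bd_quotCplx_of_mem S hS x.2)
  · intro hα
    obtain ⟨a, ha, rfl⟩ := exists_clsOf_eq _ α
    obtain ⟨y, hy⟩ :=
      (mk_mem_Bd_quotCplx_iff S hS h a).1 ((clsOf_eq_zero_iff _ _).1 hα)
    let s : (subCplx N S hS).X n := ⟨_, hy⟩
    have hs : s ∈ (subCplx N S hS).Zc n := by
      refine mem_Zc.2 (Subtype.ext ?_)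
      change N.d n (a - N.tr h (N.d (n - 1) y)) = 0
      rw [map_sub, mem_Zc.1 ha, mem_Zc.1 (N.Bd_le_Zc n (tr_d_mem_Bd N h y)), sub_zero]
    refine ⟨(subCplx N S hS).clsOf n s hs, ?_⟩
    rw [Hmap_clsOf, clsOf_eq_iff]
    change a - (a - _) ∈ N.Bd n
    rw [sub_sub_cancel]
    exact tr_d_mem_Bd N h y

def relZc (n : ℤ) : AddSubgroup (N.X n) := (S (n + 1)).comap (N.d n)

lemma Zc_le_relZc (n : ℤ) : N.Zc n ≤ relZc S n := fun a ha => by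
  rw [relZc, AddSubgroup.mem_comap, mem_Zc.1 ha]
  exact zero_mem _

def relCls (n : ℤ) : relZc S n →+ (quotCplx N S hS).H n :=
  AddMonoidHom.mk'
    (fun a => clsOf _ n (QuotientAddGroup.mk a.1) ((mk_mem_Zc_quotCplx_iff S hS a.1).2 a.2))
    (fun _ _ => rfl)

lemma relCls_surjective (n : ℤ) : Function.Surjective (relCls S hS n) := by
  intro α
  obtain ⟨x, hx, rfl⟩ := exists_clsOf_eq _ α
  obtain ⟨a, rfl⟩ := QuotientAddGroup.mk_surjective x
  exact ⟨⟨a, (mk_mem_Zc_quotCplx_iff S hS a).1 hx⟩, rfl⟩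

lemma relCls_eq_of_sub_mem {n : ℤ} {a b : relZc S n} (h : a.1 - b.1 ∈ S n) :
    relCls S hS n a = relCls S hS n b := by
  rw [← sub_eq_zero, ← map_sub]
  exact (clsOf_eq_zero_iff _ _).2 (mk_mem_Bd_quotCplx_of_mem S hS h)

end Quotient

lemma Hom.exists_d_eq_and_sub_mem_Bd {N M : Cplx} (q : Hom N M) {n : ℤ}
    (hinj : Function.Injective (Hmap q (n + 1))) (hsurj : Function.Surjective (Hmap q n))
    {x : N.X (n + 1)} (hx : x ∈ N.Zc (n + 1)) {w : M.X n} (hw : q.f (n + 1) x = M.d n w) :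
    ∃ a : N.X n, N.d n a = x ∧ q.f n a - w ∈ M.Bd n := by
  have hx0 : N.clsOf (n + 1) x hx = 0 := hinj <| by
    rw [map_zero, Hmap_clsOf, clsOf_eq_zero_iff, hw]
    exact tr_d_mem_Bd M rfl w
  obtain ⟨a₀, rfl⟩ := (N.mem_Bd_iff rfl).1 ((clsOf_eq_zero_iff _ _).1 hx0)
  have hz : w - q.f n a₀ ∈ M.Zc n := by
    rw [mem_Zc, map_sub, ← q.comm, ← hw, tr_rfl, sub_self]
  obtain ⟨c, hc⟩ := hsurj (M.clsOf n _ hz)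
  obtain ⟨z, hz, rfl⟩ := exists_clsOf_eq _ c
  refine ⟨a₀ + z, by rw [map_add, mem_Zc.1 hz, add_zero, tr_rfl], ?_⟩
  rw [map_add, show q.f n a₀ + q.f n z - w = -(w - q.f n a₀ - q.f n z) by abel]
  exact neg_mem ((clsOf_eq_iff _ _ _).1 hc)

section LongExactSequence

variable {L M N : Cplx} (u : Hom L M) (q : Hom N M) (S : ∀ n, AddSubgroup (N.X n))
  (hS : ∀ (n : ℤ) (x : N.X n), x ∈ S n → N.d n x ∈ S (n + 1))

local notation "φ" => sumHom u (q.comp (subIncl N S hS))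

def connectingCocycle {n : ℤ} (a : relZc S n) : (cone φ).X (n + 1) :=
  coneMk φ rfl ((0, ⟨N.d n a, a.2⟩), q.f n a)

lemma connectingCocycle_mem_Zc {n : ℤ} (a : relZc S n) :
    connectingCocycle u q S hS a ∈ (cone φ).Zc (n + 1) := by
  refine (coneMk_mem_Zc_iff _ rfl _ _).2
    ⟨Prod.ext (map_zero (L.d (n + 1))) (Subtype.ext (N.dsq n a)), ?_⟩
  change u.f (n + 1) 0 + q.f (n + 1) (N.d n a) = M.d n (q.f n a)
  rw [map_zero, zero_add, q.comm]

lemma connectingCocycle_add {n : ℤ} (a b : relZc S n) :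
    connectingCocycle u q S hS (a + b) =
      connectingCocycle u q S hS a + connectingCocycle u q S hS b := by
  unfold connectingCocycle
  rw [← map_add]
  congr 1
  refine Prod.ext (Prod.ext (add_zero 0).symm (Subtype.ext ?_)) ?_ <;>
    exact map_add _ _ _

def connectingCls (n : ℤ) : relZc S n →+ (cone φ).H (n + 1) :=
  AddMonoidHom.mk'
    (fun a => clsOf _ _ (connectingCocycle u q S hS a) (connectingCocycle_mem_Zc u q S hS a))
    (fun a b => by simp only [connectingCocycle_add]; rfl)

lemma connectingCls_eq_zero_of_relCls_eq_zero {n : ℤ} (a : relZc S n)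
    (ha : relCls S hS n a = 0) : connectingCls u q S hS n a = 0 := by
  have h : n - 1 + 1 = n := sub_add_cancel n 1
  obtain ⟨y, hy⟩ := (mk_mem_Bd_quotCplx_iff S hS h a.1).1 ((clsOf_eq_zero_iff _ _).1 ha)
  refine (clsOf_eq_zero_iff _ _).2 ((coneMk_mem_Bd_iff _ h _ _).2
    ⟨(0, ⟨_, hy⟩), -q.f (n - 1) y, Prod.ext (map_zero (L.d n)) (Subtype.ext ?_), ?_⟩)
  · change N.d n (a.1 - N.tr h (N.d (n - 1) y)) = N.d n a
    rw [map_sub, mem_Zc.1 (N.Bd_le_Zc n (tr_d_mem_Bd N h y)), sub_zero]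
  · change u.f n 0 + q.f n (a.1 - N.tr h (N.d (n - 1) y)) - _ = q.f n a
    rw [map_zero, zero_add, map_neg, map_neg, sub_neg_eq_add, map_sub, ← q.comm, Hom.f_tr,
      sub_add_cancel]

noncomputable def delta (n : ℤ) : (quotCplx N S hS).H n →+ (cone φ).H (n + 1) :=
  (relCls S hS n).liftOfRightInverse _ (Function.rightInverse_surjInv (relCls_surjective S hS n))
    ⟨connectingCls u q S hS n, fun a ha =>
      connectingCls_eq_zero_of_relCls_eq_zero u q S hS a ha⟩

lemma delta_relCls {n : ℤ} (a : relZc S n) :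
    delta u q S hS n (relCls S hS n a) = connectingCls u q S hS n a :=
  AddMonoidHom.liftOfRightInverse_comp_apply _ _ _ _ a

noncomputable def beta {n : ℤ} (hq : Function.Bijective (Hmap q n)) :
    L.H n →+ (quotCplx N S hS).H n :=
  (Hmap (quotProj N S hS) n).comp
    ((AddEquiv.ofBijective (Hmap q n) hq).symm.toAddMonoidHom.comp (Hmap u n))

lemma beta_clsOf {n : ℤ} (hq : Function.Bijective (Hmap q n)) {l : L.X n} (hl : l ∈ L.Zc n)
    {a : N.X n} (ha : a ∈ N.Zc n) (h : u.f n l - q.f n a ∈ M.Bd n) :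
    beta u q S hS hq (L.clsOf n l hl) =
      relCls S hS n ⟨a, Zc_le_relZc S n ha⟩ := by
  have hcls : (AddEquiv.ofBijective (Hmap q n) hq).symm (Hmap u n (L.clsOf n l hl)) =
      N.clsOf n a ha := by
    rw [AddEquiv.symm_apply_eq, AddEquiv.ofBijective_apply, Hmap_clsOf, Hmap_clsOf,
      clsOf_eq_iff, ← neg_mem_iff, neg_sub]
    exact h
  change Hmap (quotProj N S hS) n
    ((AddEquiv.ofBijective (Hmap q n) hq).symm (Hmap u n (L.clsOf n l hl))) = _
  rw [hcls]
  rfl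

lemma range_Hmap_coneProjL_eq_ker_beta {n : ℤ} (hq : Function.Bijective (Hmap q n)) :
    (Hmap (coneProjL u (q.comp (subIncl N S hS))) n).range = (beta u q S hS hq).ker := by
  rw [range_Hmap_coneProjL, Hmap_comp, AddMonoidHom.range_comp, range_Hmap_subIncl, beta,
    ← AddMonoidHom.comap_ker, ← AddSubgroup.comap_comap]
  congr 1
  exact AddSubgroup.map_equiv_eq_comap_symm' (AddEquiv.ofBijective (Hmap q n) hq) _

lemma range_beta_eq_ker_delta {n : ℤ} (hq : Function.Bijective (Hmap q n)) :
    (beta u q S hS hq).range = (delta u q S hS n).ker := by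
  have h : n - 1 + 1 = n := sub_add_cancel n 1
  ext γ
  rw [AddMonoidHom.mem_range, AddMonoidHom.mem_ker]
  constructor
  · rintro ⟨α, rfl⟩
    obtain ⟨l, hl, rfl⟩ := exists_clsOf_eq _ α
    obtain ⟨c, hc⟩ := hq.2 (Hmap u n (L.clsOf n l hl))
    obtain ⟨a, ha, rfl⟩ := exists_clsOf_eq _ c
    have hB : u.f n l - q.f n a ∈ M.Bd n := (clsOf_eq_iff _ _ _).1 hc
    obtain ⟨m, hm⟩ := (M.mem_Bd_iff h).1 hB
    rw [beta_clsOf u q S hS hq hl ha hB, delta_relCls]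
    refine (clsOf_eq_zero_iff _ _).2 ((coneMk_mem_Bd_iff _ h _ _).2
      ⟨(l, 0), m, Prod.ext (mem_Zc.1 hl)
        (Subtype.ext (show N.d n 0 = N.d n a by rw [map_zero, mem_Zc.1 ha])), ?_⟩)
    change u.f n l + q.f n 0 - M.tr h (M.d (n - 1) m) = q.f n a
    rw [map_zero, add_zero, hm, sub_sub_cancel]
  · intro hγ
    obtain ⟨a, rfl⟩ := relCls_surjective S hS n γ
    rw [delta_relCls] at hγ
    obtain ⟨⟨l, x, hxS⟩, m, hd, hm⟩ :=
      (coneMk_mem_Bd_iff _ h _ _).1 ((clsOf_eq_zero_iff _ _).1 hγ)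
    obtain ⟨hl, hx⟩ := Prod.ext_iff.1 hd
    have hx' : N.d n x = N.d n a := congrArg Subtype.val hx
    have hax : a.1 - x ∈ N.Zc n := by
      rw [mem_Zc, map_sub, hx', sub_self]
    have hB : u.f n l - q.f n (a.1 - x) ∈ M.Bd n := by
      have hm' : u.f n l + q.f n x - M.tr h (M.d (n - 1) m) = q.f n a.1 := hm
      rw [map_sub, ← hm']
      convert tr_d_mem_Bd M h m using 1
      abel
    refine ⟨L.clsOf n l (mem_Zc.2 hl), ?_⟩
    rw [beta_clsOf u q S hS hq _ hax hB]
    exact relCls_eq_of_sub_mem S hS (by rw [sub_sub_cancel_left]; exact neg_mem hxS)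

lemma range_delta_eq_ker_Hmap_coneProjL (n : ℤ) (hinj : Function.Injective (Hmap q (n + 1)))
    (hsurj : Function.Surjective (Hmap q n)) :
    (delta u q S hS n).range =
      (Hmap (coneProjL u (q.comp (subIncl N S hS))) (n + 1)).ker := by
  have h : n - 1 + 1 = n := sub_add_cancel n 1
  ext γ
  rw [AddMonoidHom.mem_range, AddMonoidHom.mem_ker]
  constructor
  · rintro ⟨α, rfl⟩
    obtain ⟨a, rfl⟩ := relCls_surjective S hS n α
    rw [delta_relCls]
    rfl
  · intro hγ
    obtain ⟨c, hc, rfl⟩ := exists_clsOf_eq _ γ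
    obtain ⟨⟨⟨l, x⟩, m⟩, rfl⟩ := (coneMk _ rfl).surjective c
    obtain ⟨hd, hφ⟩ := (coneMk_mem_Zc_iff _ rfl _ _).1 hc
    obtain ⟨l₀, rfl⟩ := (L.mem_Bd_iff rfl).1 ((clsOf_eq_zero_iff _ _).1 hγ)
    have hx : x.1 ∈ N.Zc (n + 1) := mem_Zc.2 (congrArg Subtype.val (congrArg Prod.snd hd))
    have hw : q.f (n + 1) x.1 = M.d n (m - u.f n l₀) := by
      have hφ' : u.f (n + 1) (L.d n l₀) + q.f (n + 1) x.1 = M.d n m := hφ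
      rw [map_sub, ← u.comm, ← hφ', add_sub_cancel_left]
    obtain ⟨a, hda, hqa⟩ := q.exists_d_eq_and_sub_mem_Bd hinj hsurj hx hw
    obtain ⟨m₀, hm₀⟩ := (M.mem_Bd_iff h).1 hqa
    have ha : a ∈ relZc S n := by
      rw [relZc, AddSubgroup.mem_comap, hda]
      exact x.2
    refine ⟨relCls S hS n ⟨a, ha⟩, ?_⟩
    rw [delta_relCls]
    refine (clsOf_eq_iff _ _ _).2 ?_
    rw [connectingCocycle, ← map_sub]
    refine (coneMk_mem_Bd_iff _ h _ _).2 ⟨(l₀, 0), m₀, Prod.ext (sub_zero _).symm ?_, ?_⟩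
    · refine Subtype.ext (?_ : N.d n 0 = x.1 - N.d n a)
      rw [map_zero, hda, sub_self]
    · change u.f n l₀ + q.f n 0 - M.tr h (M.d (n - 1) m₀) = m - q.f n a
      rw [map_zero, add_zero, hm₀]
      abel

end LongExactSequence

end Cplx

open Cplx in
/-- The long exact sequence
`⋯ → H^n(N/F) → H^{n+1}(Cone(φ)) → H^{n+1}(L) → H^{n+1}(N/F) → ⋯`. -/
theorem stmt7 (L M N : Cplx) (u : Cplx.Hom L M) (q : Cplx.Hom N M)
    (hq : ∀ n, Function.Bijective (Hmap q n))
    (S : ∀ n, AddSubgroup (N.X n))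
    (hS : ∀ (n : ℤ) (x : N.X n), x ∈ S n → N.d n x ∈ S (n + 1)) :
    ∃ δ : ∀ n : ℤ, (quotCplx N S hS).H n →+
        (cone (sumHom u (q.comp (subIncl N S hS)))).H (n + 1),
      ∀ n : ℤ,
        ((δ n).range = (Hmap (Cplx.coneProjL u (q.comp (subIncl N S hS))) (n + 1)).ker) ∧
        ((Hmap (Cplx.coneProjL u (q.comp (subIncl N S hS))) (n + 1)).range =
          ((Hmap (quotProj N S hS) (n + 1)).comp
            ((AddEquiv.ofBijective (Hmap q (n + 1)) (hq (n + 1))).symm.toAddMonoidHom.comp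
              (Hmap u (n + 1)))).ker) ∧
        (((Hmap (quotProj N S hS) (n + 1)).comp
            ((AddEquiv.ofBijective (Hmap q (n + 1)) (hq (n + 1))).symm.toAddMonoidHom.comp
              (Hmap u (n + 1)))).range = (δ (n + 1)).ker) :=
  ⟨delta u q S hS, fun n =>
    ⟨range_delta_eq_ker_Hmap_coneProjL u q S hS n (hq (n + 1)).1 (hq n).2,
      range_Hmap_coneProjL_eq_ker_beta u q S hS (hq (n + 1)),
      range_beta_eq_ker_delta u q S hS (hq (n + 1))⟩⟩
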